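/- The map λ ↦ D₀(λ;6) is complex differentiable at λ = √3·i with derivative (−3 + 5√3·i)/49; the map m ↦ D₀(√3·i;m) is differentiable at m = 6 with derivative (1 − √3·i)/14; and the transversality ratio satisfies −[(1−√3·i)/14] / [(−3+5√3·i)/49] = 3/4 + (√3/12)·i, whose real part is positive. -/

import Mathlib

open Complex

/-- Principal branch of the complex square root. -/
noncomputable def csqrt (z : ℂ) : ℂ := z ^ (1/2 : ℂ)

/-- The limit dispersion relation D₀(λ;m). -/
noncomputable def dispersion0 (m : ℝ) (l : ℂ) : ℂ :=
  -(1/2) * (2 * ((m : ℂ) + l) + 1 + csqrt (1 + 4 * l)) *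
    (1 - csqrt (1 + 4 * l) / (1 + (m : ℂ))) + (m : ℂ)

/-!
Both partial derivatives of `D₀` have closed forms in terms of `s = √(1 + 4λ)`, valid
wherever `1 + 4λ` avoids the branch cut. At `λ = √3·i` the radicand is a perfect square,
`1 + 4√3·i = (2 + √3·i)²`, and `2 + √3·i` has positive real part, so `s = 2 + √3·i`; the claimed
values then reduce to polynomial identities modulo `(√3·i)² = -3`.
-/

lemma csqrt_sq_of_re_pos {w : ℂ} (hw : 0 < w.re) : csqrt (w ^ 2) = w := by
  rw [csqrt, one_div]
  exact sq_cpow_two_inv hw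

lemma hasDerivAt_csqrt {z : ℂ} (hz : z ∈ slitPlane) :
    HasDerivAt csqrt (1 / (2 * csqrt z)) z := by
  have h := (hasStrictDerivAt_cpow_const (c := 1/2) hz).hasDerivAt
  rw [show (1/2 : ℂ) - 1 = -(1/2) by norm_num, cpow_neg] at h
  refine h.congr_deriv ?_
  rw [csqrt]
  ring

lemma hasDerivAt_csqrt_one_add_four_mul {l : ℂ} (hl : 1 + 4 * l ∈ slitPlane) :
    HasDerivAt (fun l => csqrt (1 + 4 * l)) (2 / csqrt (1 + 4 * l)) l := by
  have hlin : HasDerivAt (fun l : ℂ => 1 + 4 * l) 4 l := by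
    simpa using ((hasDerivAt_id l).const_mul (4 : ℂ)).const_add 1
  refine ((hasDerivAt_csqrt hl).comp l hlin).congr_deriv ?_
  ring

lemma hasDerivAt_dispersion0_spectral (m : ℝ) {l : ℂ} (hl : 1 + 4 * l ∈ slitPlane) :
    HasDerivAt (dispersion0 m)
      (-(1/2) * ((2 + 2 / csqrt (1 + 4 * l)) * (1 - csqrt (1 + 4 * l) / (1 + m))
        - (2 * (m + l) + 1 + csqrt (1 + 4 * l)) * (2 / csqrt (1 + 4 * l) / (1 + m)))) l := by
  have hs := hasDerivAt_csqrt_one_add_four_mul hl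
  have hA : HasDerivAt (fun l : ℂ => 2 * ((m : ℂ) + l) + 1 + csqrt (1 + 4 * l))
      (2 + 2 / csqrt (1 + 4 * l)) l := by
    refine ((((hasDerivAt_id' l).const_add (m : ℂ)).const_mul 2).add_const 1).add hs
      |>.congr_deriv ?_
    ring
  have hB : HasDerivAt (fun l : ℂ => 1 - csqrt (1 + 4 * l) / (1 + m))
      (-(2 / csqrt (1 + 4 * l) / (1 + m))) l :=
    (hs.div_const _).const_sub 1
  have hD : dispersion0 m = fun l => -(1/2) * ((2 * ((m : ℂ) + l) + 1 + csqrt (1 + 4 * l)) *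
      (1 - csqrt (1 + 4 * l) / (1 + m))) + m := by
    funext l
    simp only [dispersion0, mul_assoc]
  rw [hD]
  refine (((hA.mul hB).const_mul (-(1/2) : ℂ)).add_const (m : ℂ)).congr_deriv ?_
  ring

lemma hasDerivAt_dispersion0_param (l : ℂ) {m : ℝ} (hm : m ≠ -1) :
    HasDerivAt (fun m : ℝ => dispersion0 m l)
      (-(1/2) * (2 * (1 - csqrt (1 + 4 * l) / (1 + m))
        + (2 * (m + l) + 1 + csqrt (1 + 4 * l)) * (csqrt (1 + 4 * l) / (1 + m) ^ 2)) + 1) m := by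
  set s := csqrt (1 + 4 * l)
  have hm' : (1 : ℂ) + m ≠ 0 := by
    exact_mod_cast (by contrapose! hm; linarith : (1 : ℝ) + m ≠ 0)
  have hA : HasDerivAt (fun w : ℂ => 2 * (w + l) + 1 + s) 2 m := by
    refine ((((hasDerivAt_id' (m : ℂ)).add_const l).const_mul 2).add_const 1 |>.add_const s)
      |>.congr_deriv ?_
    ring
  have hB : HasDerivAt (fun w : ℂ => 1 - s / (1 + w)) (s / (1 + m) ^ 2) m := by
    have hinv := (hasDerivAt_const (m : ℂ) s).div ((hasDerivAt_id' (m : ℂ)).const_add 1) hm'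
    refine (hinv.const_sub 1).congr_deriv ?_
    ring
  have hD : (fun m : ℝ => dispersion0 m l) = fun m : ℝ =>
      -(1/2) * ((2 * ((m : ℂ) + l) + 1 + s) * (1 - s / (1 + m))) + m := by
    funext m
    simp only [dispersion0, mul_assoc, s]
  rw [hD]
  have hC := ((hA.mul hB).const_mul (-(1/2) : ℂ)).add (hasDerivAt_id' (m : ℂ))
  refine hC.comp_ofReal.congr_deriv ?_
  ring

lemma sqrt_three_mul_I_sq : ((Real.sqrt 3 : ℂ) * I) ^ 2 = -3 := by
  rw [mul_pow, I_sq, ← ofReal_pow, Real.sq_sqrt (by norm_num : (0 : ℝ) ≤ 3)]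
  push_cast
  ring

lemma csqrt_one_add_four_mul_sqrt_three_mul_I :
    csqrt (1 + 4 * ((Real.sqrt 3 : ℂ) * I)) = 2 + (Real.sqrt 3 : ℂ) * I := by
  rw [← csqrt_sq_of_re_pos (w := 2 + (Real.sqrt 3 : ℂ) * I) (by simp)]
  congr 1
  linear_combination -sqrt_three_mul_I_sq

/-- transversality data at (λ,m) = (√3·i, 6):
∂D₀/∂λ(√3·i;6) = (−3+5√3·i)/49, ∂D₀/∂m(√3·i;6) = (1−√3·i)/14, and
−(∂D₀/∂m)/(∂D₀/∂λ) = 3/4 + (√3/12)·i, which has positive real part. -/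
theorem transversality_at_critical_point :
    HasDerivAt (fun l : ℂ => dispersion0 6 l)
      ((-3 + 5 * (Real.sqrt 3 : ℂ) * Complex.I) / 49)
      ((Real.sqrt 3 : ℂ) * Complex.I) ∧
    HasDerivAt (fun m : ℝ => dispersion0 m ((Real.sqrt 3 : ℂ) * Complex.I))
      ((1 - (Real.sqrt 3 : ℂ) * Complex.I) / 14) 6 ∧
    -((1 - (Real.sqrt 3 : ℂ) * Complex.I) / 14) /
        ((-3 + 5 * (Real.sqrt 3 : ℂ) * Complex.I) / 49) =
      3 / 4 + ((Real.sqrt 3 / 12 : ℝ) : ℂ) * Complex.I ∧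
    (0:ℝ) < (3 / 4 + ((Real.sqrt 3 / 12 : ℝ) : ℂ) * Complex.I).re := by
  have hsqrt3 : (0 : ℝ) < Real.sqrt 3 := by positivity
  have hx := sqrt_three_mul_I_sq
  have hs := csqrt_one_add_four_mul_sqrt_three_mul_I
  have hslit : 1 + 4 * ((Real.sqrt 3 : ℂ) * I) ∈ slitPlane := Or.inr (by simp [hsqrt3.ne'])
  have hne : 2 + (Real.sqrt 3 : ℂ) * I ≠ 0 := fun h => by simpa [hsqrt3.ne'] using congrArg im h
  have hden : (-3 + 5 * (Real.sqrt 3 : ℂ) * I) / 49 ≠ 0 := by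
    refine div_ne_zero (fun h => ?_) (by norm_num)
    simpa using congrArg re h
  refine ⟨?_, ?_, ?_, by simp⟩
  · refine (hasDerivAt_dispersion0_spectral 6 hslit).congr_deriv ?_
    rw [hs]
    field_simp
    push_cast
    linear_combination (2 : ℂ) * hx
  · refine (hasDerivAt_dispersion0_param _ (by norm_num)).congr_deriv ?_
    rw [hs]
    field_simp
    push_cast
    linear_combination (-6/7 : ℂ) * hx
  · rw [div_eq_iff hden]
    push_cast
    linear_combination (-5/588 : ℂ) * hx
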